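/- arXiv:0810.0096 — 3 statements merged into one kernel-verified Lean document; each statement's English description precedes it below -/
import Mathlib

section
/- Let X be a finite topological space with specialisation preorder ⪯ (x ⪯ y iff the closure of {x} is contained in the closure of {y}). A subset Y ⊆ X is locally closed (i.e., the difference of two open sets) if and only if for all x, y, z ∈ X with x ⪯ y ⪯ z and x, z ∈ Y one has y ∈ Y. -/
/-!
A locally closed set `U ∩ Z` is convex for specialisation, because open sets are closed under
generisation and closed sets under specialisation. Conversely, in an Alexandrov-discrete space
(in particular a finite one) the open hull `nhdsKer Y` consists of the generisations of points
of `Y` and `closure Y` of their specialisations, so a convex `Y` is the intersection of the two.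
-/

open Topology

theorem IsLocallyClosed.mem_of_specializes {X : Type*} [TopologicalSpace X] {s : Set X}
    {x y z : X} (hs : IsLocallyClosed s) (hyx : y ⤳ x) (hzy : z ⤳ y) (hx : x ∈ s) (hz : z ∈ s) :
    y ∈ s := by
  obtain ⟨U, Z, hU, hZ, rfl⟩ := hs
  exact ⟨hyx.mem_open hU hx.1, hzy.mem_closed hZ hz.2⟩

section AlexandrovDiscrete

variable {X : Type*} [TopologicalSpace X] [AlexandrovDiscrete X] {s : Set X}

theorem mem_closure_iff_exists_specializes {y : X} : y ∈ closure s ↔ ∃ x ∈ s, x ⤳ y := by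
  refine ⟨fun hy => ?_, fun ⟨x, hx, hxy⟩ => hxy.mem_closed isClosed_closure (subset_closure hx)⟩
  have hclosed : IsClosed {y | ∃ x ∈ s, x ⤳ y} := by
    refine isOpen_compl_iff.mp (isOpen_iff_forall_specializes.mpr ?_)
    rintro a b hab hb ⟨x, hx, hxa⟩
    exact hb ⟨x, hx, hxa.trans hab⟩
  refine closure_minimal (fun x hx => ?_) hclosed hy
  exact ⟨x, hx, specializes_rfl⟩

theorem isLocallyClosed_of_forall_specializes
    (h : ∀ x y z : X, y ⤳ x → z ⤳ y → x ∈ s → z ∈ s → y ∈ s) : IsLocallyClosed s := by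
  refine ⟨nhdsKer s, closure s, isOpen_nhdsKer, isClosed_closure, ?_⟩
  refine (Set.subset_inter subset_nhdsKer subset_closure).antisymm ?_
  rintro y ⟨hyU, hyZ⟩
  obtain ⟨x, hx, hyx⟩ := mem_nhdsKer_iff_specializes.mp hyU
  obtain ⟨z, hz, hzy⟩ := mem_closure_iff_exists_specializes.mp hyZ
  exact h x y z hyx hzy hx hz

theorem isLocallyClosed_iff_forall_specializes :
    IsLocallyClosed s ↔ ∀ x y z : X, y ⤳ x → z ⤳ y → x ∈ s → z ∈ s → y ∈ s :=
  ⟨fun hs _ _ _ hyx hzy hx hz => hs.mem_of_specializes hyx hzy hx hz,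
    isLocallyClosed_of_forall_specializes⟩

end AlexandrovDiscrete

/-- For a finite topological space `X` with specialisation preorder
`x ⪯ y ↔ closure {x} ⊆ closure {y}`, a subset `Y` is locally closed if and only if
it is convex for the specialisation preorder: whenever `x ⪯ y ⪯ z` with `x, z ∈ Y`
one has `y ∈ Y`. -/
theorem stmt1 {X : Type*} [TopologicalSpace X] [Finite X] (Y : Set X) :
    IsLocallyClosed Y ↔
      ∀ x y z : X, closure {x} ⊆ closure {y} → closure {y} ⊆ closure {z} →
        x ∈ Y → z ∈ Y → y ∈ Y := by
  simp only [← specializes_iff_closure_subset]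
  exact isLocallyClosed_iff_forall_specializes
end

section
/- Let X be a finite T0 topological space and let m, M : Ch(X) → X be the maps on the order complex sending a point in the open simplex of a strict chain x₀ ≺ ⋯ ≺ xₙ to x₀ and xₙ respectively. If Y ⊆ X is closed, then m⁻¹(Y) is open and M⁻¹(Y) is closed in Ch(X); if Y ⊆ X is open, then m⁻¹(Y) is closed and M⁻¹(Y) is open; consequently, if Y is locally closed then both m⁻¹(Y) and M⁻¹(Y) are locally closed. -/
/-- The order complex `Ch(X)` of a preordered set `X`, realised geometrically as the set
of weight functions `w : X → ℝ` with nonnegative values summing to `1` whose support is a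
chain.  The open simplex of a strict chain `I` consists of those `w` supported exactly
on `I`. -/
def OrderComplex (X : Type*) [Preorder X] : Set (X → ℝ) :=
  {w | (∀ x, 0 ≤ w x) ∧ (∑ᶠ x, w x) = 1 ∧ IsChain (· ≤ ·) {x | w x ≠ 0}}

/-- The preimage `m⁻¹(Y)` in `Ch(X)` of a subset `Y ⊆ X` under the map `m` sending a
point of the open simplex of a strict chain `x₀ ≺ ⋯ ≺ xₙ` to the minimum `x₀`. -/
def mPre (X : Type*) [Preorder X] (Y : Set X) : Set (X → ℝ) :=
  {w ∈ OrderComplex X | ∃ x ∈ Y, w x ≠ 0 ∧ ∀ y, w y ≠ 0 → x ≤ y}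

/-- The preimage `M⁻¹(Y)` in `Ch(X)` of a subset `Y ⊆ X` under the map `M` sending a
point of the open simplex of a strict chain `x₀ ≺ ⋯ ≺ xₙ` to the maximum `xₙ`. -/
def MPre (X : Type*) [Preorder X] (Y : Set X) : Set (X → ℝ) :=
  {w ∈ OrderComplex X | ∃ x ∈ Y, w x ≠ 0 ∧ ∀ y, w y ≠ 0 → y ≤ x}

/-!
Each point `w` of `Ch(X)` has finite nonempty chain support, so `m w` and `M w` are its least
and greatest elements. For a lower set `Y` the least element lies in `Y` iff the support meets
`Y`, and for an upper set iff the support is contained in `Y` (dually for the greatest element).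
In the product topology on `X → ℝ`, "the support meets `Y`" is open, being a union of the open
conditions `w x ≠ 0`, and "the support lies in `Y`" is closed, its complement being of the
first kind. Locally closed `Y` are differences of upper sets, and preimages respect differences.
-/

open Function Set

section Order
variable {X : Type*} [Preorder X] {S Y : Set X} {a : X}

lemma IsChain.isLeast_of_minimal (hS : IsChain (· ≤ ·) S) (ha : Minimal (· ∈ S) a) :
    IsLeast S a :=
  ⟨ha.prop, fun _ hb => (hS.total ha.prop hb).elim id (ha.le_of_le hb)⟩

lemma IsChain.isGreatest_of_maximal (hS : IsChain (· ≤ ·) S) (ha : Maximal (· ∈ S) a) :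
    IsGreatest S a :=
  ⟨ha.prop, fun _ hb => (hS.total ha.prop hb).elim (ha.le_of_ge hb) id⟩

lemma IsLeast.mem_iff_inter_nonempty (ha : IsLeast S a) (hY : IsLowerSet Y) :
    a ∈ Y ↔ (S ∩ Y).Nonempty :=
  ⟨fun h => ⟨a, ha.1, h⟩, fun ⟨_, hb, hbY⟩ => hY (ha.2 hb) hbY⟩

lemma IsLeast.mem_iff_subset (ha : IsLeast S a) (hY : IsUpperSet Y) : a ∈ Y ↔ S ⊆ Y :=
  ⟨fun h _ hb => hY (ha.2 hb) h, fun h => h ha.1⟩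

lemma IsGreatest.mem_iff_inter_nonempty (ha : IsGreatest S a) (hY : IsUpperSet Y) :
    a ∈ Y ↔ (S ∩ Y).Nonempty :=
  ⟨fun h => ⟨a, ha.1, h⟩, fun ⟨_, hb, hbY⟩ => hY (ha.2 hb) hbY⟩

lemma IsGreatest.mem_iff_subset (ha : IsGreatest S a) (hY : IsLowerSet Y) : a ∈ Y ↔ S ⊆ Y :=
  ⟨fun h _ hb => hY (ha.2 hb) h, fun h => h ha.1⟩

end Order

section Topology
variable {Z : Type*} [TopologicalSpace Z] {A B : Set Z}

lemma IsClosed.isLocallyClosed_diff (hA : IsClosed A) (hB : IsClosed B) :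
    IsLocallyClosed (A \ B) :=
  hA.isLocallyClosed.inter hB.isOpen_compl.isLocallyClosed

lemma IsOpen.isLocallyClosed_diff (hA : IsOpen A) (hB : IsOpen B) : IsLocallyClosed (A \ B) :=
  hA.isLocallyClosed.inter hB.isClosed_compl.isLocallyClosed

variable {ι M : Type*} [Zero M] [TopologicalSpace M] [T1Space M]

lemma isOpen_setOf_support_inter_nonempty (Y : Set ι) :
    IsOpen {w : ι → M | (support w ∩ Y).Nonempty} := by
  have : {w : ι → M | (support w ∩ Y).Nonempty} = ⋃ x ∈ Y, {w | w x ≠ 0} := by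
    ext w
    simp only [mem_ofPred_eq, mem_iUnion, exists_prop]
    exact ⟨fun ⟨x, hx, hxY⟩ => ⟨x, hxY, hx⟩, fun ⟨x, hxY, hx⟩ => ⟨x, hx, hxY⟩⟩
  rw [this]
  exact isOpen_biUnion fun x _ => isOpen_ne.preimage (continuous_apply x)

lemma isClosed_setOf_support_subset (Y : Set ι) : IsClosed {w : ι → M | support w ⊆ Y} := by
  have : {w : ι → M | support w ⊆ Y} = {w | (support w ∩ Yᶜ).Nonempty}ᶜ := by
    ext w
    simp only [mem_ofPred_eq, mem_compl_iff, ← sdiff_eq, sdiff_nonempty, not_not]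
  rw [this]
  exact (isOpen_setOf_support_inter_nonempty Yᶜ).isClosed_compl

end Topology

namespace OrderComplex
variable {X : Type*}

lemma support_finite [Preorder X] {w : X → ℝ} (hw : w ∈ OrderComplex X) :
    (support w).Finite :=
  by_contra fun h => by simpa [finsum_of_infinite_support h] using hw.2.1

lemma support_nonempty [Preorder X] {w : X → ℝ} (hw : w ∈ OrderComplex X) :
    (support w).Nonempty :=
  support_nonempty_iff.2 fun h => by simpa [h] using hw.2.1

lemma exists_isLeast_support [Preorder X] {w : X → ℝ} (hw : w ∈ OrderComplex X) :
    ∃ a, IsLeast (support w) a :=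
  ((support_finite hw).exists_minimal (support_nonempty hw)).imp fun _ =>
    hw.2.2.isLeast_of_minimal

lemma exists_isGreatest_support [Preorder X] {w : X → ℝ} (hw : w ∈ OrderComplex X) :
    ∃ a, IsGreatest (support w) a :=
  ((support_finite hw).exists_maximal (support_nonempty hw)).imp fun _ =>
    hw.2.2.isGreatest_of_maximal

variable [PartialOrder X] {Y : Set X}

/-- The map `m : Ch(X) → X`. -/
noncomputable def minVertex (w : OrderComplex X) : X := (exists_isLeast_support w.2).choose

/-- The map `M : Ch(X) → X`. -/
noncomputable def maxVertex (w : OrderComplex X) : X := (exists_isGreatest_support w.2).choose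

lemma isLeast_minVertex (w : OrderComplex X) : IsLeast (support (w : X → ℝ)) (minVertex w) :=
  (exists_isLeast_support w.2).choose_spec

lemma isGreatest_maxVertex (w : OrderComplex X) :
    IsGreatest (support (w : X → ℝ)) (maxVertex w) :=
  (exists_isGreatest_support w.2).choose_spec

lemma setOf_mem_mPre (Y : Set X) :
    {w : OrderComplex X | (w : X → ℝ) ∈ mPre X Y} = minVertex ⁻¹' Y :=
  ext fun w => ⟨fun ⟨_, _, hxY, hx⟩ =>
    show minVertex w ∈ Y from (isLeast_minVertex w).unique hx ▸ hxY,
    fun h => ⟨w.2, _, h, isLeast_minVertex w⟩⟩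

lemma setOf_mem_MPre (Y : Set X) :
    {w : OrderComplex X | (w : X → ℝ) ∈ MPre X Y} = maxVertex ⁻¹' Y :=
  ext fun w => ⟨fun ⟨_, _, hxY, hx⟩ =>
    show maxVertex w ∈ Y from (isGreatest_maxVertex w).unique hx ▸ hxY,
    fun h => ⟨w.2, _, h, isGreatest_maxVertex w⟩⟩

lemma isOpen_minVertex_preimage (hY : IsLowerSet Y) : IsOpen (minVertex ⁻¹' Y) := by
  have : minVertex ⁻¹' Y = (↑) ⁻¹' {w : X → ℝ | (support w ∩ Y).Nonempty} :=
    ext fun w => (isLeast_minVertex w).mem_iff_inter_nonempty hY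
  exact this ▸ (isOpen_setOf_support_inter_nonempty Y).preimage continuous_subtype_val

lemma isClosed_minVertex_preimage (hY : IsUpperSet Y) : IsClosed (minVertex ⁻¹' Y) := by
  have : minVertex ⁻¹' Y = (↑) ⁻¹' {w : X → ℝ | support w ⊆ Y} :=
    ext fun w => (isLeast_minVertex w).mem_iff_subset hY
  exact this ▸ (isClosed_setOf_support_subset Y).preimage continuous_subtype_val

lemma isOpen_maxVertex_preimage (hY : IsUpperSet Y) : IsOpen (maxVertex ⁻¹' Y) := by
  have : maxVertex ⁻¹' Y = (↑) ⁻¹' {w : X → ℝ | (support w ∩ Y).Nonempty} :=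
    ext fun w => (isGreatest_maxVertex w).mem_iff_inter_nonempty hY
  exact this ▸ (isOpen_setOf_support_inter_nonempty Y).preimage continuous_subtype_val

lemma isClosed_maxVertex_preimage (hY : IsLowerSet Y) : IsClosed (maxVertex ⁻¹' Y) := by
  have : maxVertex ⁻¹' Y = (↑) ⁻¹' {w : X → ℝ | support w ⊆ Y} :=
    ext fun w => (isGreatest_maxVertex w).mem_iff_subset hY
  exact this ▸ (isClosed_setOf_support_subset Y).preimage continuous_subtype_val

end OrderComplex

theorem stmt3_general (X : Type*) [PartialOrder X] (Y : Set X) :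
    (IsLowerSet Y →
      IsOpen {w : OrderComplex X | (w : X → ℝ) ∈ mPre X Y} ∧
      IsClosed {w : OrderComplex X | (w : X → ℝ) ∈ MPre X Y}) ∧
    (IsUpperSet Y →
      IsClosed {w : OrderComplex X | (w : X → ℝ) ∈ mPre X Y} ∧
      IsOpen {w : OrderComplex X | (w : X → ℝ) ∈ MPre X Y}) ∧
    ((∃ U V : Set X, IsUpperSet U ∧ IsUpperSet V ∧ Y = U \ V) →
      IsLocallyClosed {w : OrderComplex X | (w : X → ℝ) ∈ mPre X Y} ∧
      IsLocallyClosed {w : OrderComplex X | (w : X → ℝ) ∈ MPre X Y}) := by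
  simp only [OrderComplex.setOf_mem_mPre, OrderComplex.setOf_mem_MPre]
  refine ⟨fun hY => ⟨OrderComplex.isOpen_minVertex_preimage hY,
      OrderComplex.isClosed_maxVertex_preimage hY⟩,
    fun hY => ⟨OrderComplex.isClosed_minVertex_preimage hY,
      OrderComplex.isOpen_maxVertex_preimage hY⟩, ?_⟩
  rintro ⟨U, V, hU, hV, rfl⟩
  rw [preimage_sdiff, preimage_sdiff]
  exact ⟨(OrderComplex.isClosed_minVertex_preimage hU).isLocallyClosed_diff
      (OrderComplex.isClosed_minVertex_preimage hV),
    (OrderComplex.isOpen_maxVertex_preimage hU).isLocallyClosed_diff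
      (OrderComplex.isOpen_maxVertex_preimage hV)⟩

/-- Let `X` be a finite T₀ space, identified with a finite partial order carrying the
Alexandrov topology (so closed subsets are the lower sets, open subsets the upper sets,
and locally closed subsets the differences of two upper sets).  If `Y ⊆ X` is closed,
then `m⁻¹(Y)` is open and `M⁻¹(Y)` is closed in the order complex `Ch(X)`; if `Y` is
open, then `m⁻¹(Y)` is closed and `M⁻¹(Y)` is open; consequently, if `Y` is locally
closed, then `m⁻¹(Y)` and `M⁻¹(Y)` are locally closed in `Ch(X)`. -/
theorem stmt3 (X : Type*) [PartialOrder X] [Finite X] (Y : Set X) :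
    (IsLowerSet Y →
      IsOpen {w : OrderComplex X | (w : X → ℝ) ∈ mPre X Y} ∧
      IsClosed {w : OrderComplex X | (w : X → ℝ) ∈ MPre X Y}) ∧
    (IsUpperSet Y →
      IsClosed {w : OrderComplex X | (w : X → ℝ) ∈ mPre X Y} ∧
      IsOpen {w : OrderComplex X | (w : X → ℝ) ∈ MPre X Y}) ∧
    ((∃ U V : Set X, IsUpperSet U ∧ IsUpperSet V ∧ Y = U \ V) →
      IsLocallyClosed {w : OrderComplex X | (w : X → ℝ) ∈ mPre X Y} ∧
      IsLocallyClosed {w : OrderComplex X | (w : X → ℝ) ∈ MPre X Y}) :=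
  stmt3_general X Y
end

section
/- Let 𝔗 be a triangulated category, 𝕀 a homological ideal in 𝔗 with enough 𝕀-projective objects, and F : 𝔗 → 𝒜 a universal 𝕀-exact stable homological functor. If 𝕀² ≠ 0, then there exist objects B, D in 𝔗 with F(B) ≅ F(D) in 𝒜 but B ≇ D in 𝔗. -/
/-!
Write `𝕀 = ker F`. Resolving `X` and then the cone `N` of `Q → X` by `𝕀`-projectives
`Q → X → N` and `Q' → N → N'` and gluing them yields an object `P`, an extension of `Q'` by `Q`,
with a map `p : P → X`. Being such an extension, `P` kills every composite of two maps of `𝕀`;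
on the other hand `F p` is a split epimorphism, because the obstruction to splitting is a map
factoring through `N → N'`, which lies in `𝕀`. Completing `p` to a triangle `W → P → X → W⟦1⟧`
then gives `F P ≅ F W ⊞ F X ≅ F (W ⊞ X)`. If `P ≅ W ⊞ X`, then `X` would be a retract of `P` and
so would kill composites of two maps of `𝕀`, which is exactly what `𝕀² ≠ 0` excludes for a
suitable `X`.
-/

open CategoryTheory Limits Pretriangulated

universe u v w w' x x'

namespace CategoryTheory.Functor

section KerProjective

variable {C A : Type*} [Category C] [Category A] [HasZeroMorphisms C] [HasZeroMorphisms A]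
  (F : C ⥤ A)

def IsKerProjective (P : C) : Prop :=
  ∀ ⦃Y : C⦄ (f : P ⟶ Y), F.map f = 0 → f = 0

-- `𝕀²`-projectivity, tested on the composites `f ≫ g` that generate `𝕀²` additively.
def IsKerSqProjective (P : C) : Prop :=
  ∀ ⦃Y Z : C⦄ (f : P ⟶ Y) (g : Y ⟶ Z), F.map f = 0 → F.map g = 0 → f ≫ g = 0

variable {F} in
lemma IsKerSqProjective.of_retract {X P : C} (h : Retract X P) (hP : F.IsKerSqProjective P) :
    F.IsKerSqProjective X := by
  intro Y Z f g hf hg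
  rw [← Category.id_comp (f ≫ g), ← h.retract, Category.assoc, ← Category.assoc h.r,
    hP _ g (by rw [F.map_comp, hf, comp_zero]) hg, comp_zero]

end KerProjective

lemma map_shift_map_eq_zero {C A M : Type*} [Category C] [Category A] [AddMonoid M]
    [HasShift C M] [HasShift A M] [HasZeroMorphisms A]
    [∀ n : M, (shiftFunctor A n).PreservesZeroMorphisms] (F : C ⥤ A) [F.CommShift M]
    {X Y : C} (f : X ⟶ Y) (hf : F.map f = 0) (n : M) : F.map (f⟦n⟧') = 0 := by
  rw [← cancel_mono ((F.commShiftIso n).hom.app Y), commShiftIso_hom_naturality, hf,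
    Functor.map_zero, comp_zero, zero_comp]

variable {C : Type*} [Category C] [Preadditive C] [HasZeroObject C] [HasShift C ℤ]
  [∀ n : ℤ, (shiftFunctor C n).Additive] [Pretriangulated C]

section

variable {A : Type*} [Category A] [HasZeroMorphisms A] (F : C ⥤ A)

def HasEnoughKerProjectives : Prop :=
  ∀ X : C, ∃ (P N : C) (π : P ⟶ X) (ι : X ⟶ N) (δ : N ⟶ P⟦(1 : ℤ)⟧),
    Triangle.mk π ι δ ∈ distTriang C ∧ F.map ι = 0 ∧ F.IsKerProjective P

lemma isKerSqProjective_of_distTriang (T : Triangle C) (hT : T ∈ distTriang C)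
    (h₁ : F.IsKerProjective T.obj₁) (h₃ : F.IsKerProjective T.obj₃) :
    F.IsKerSqProjective T.obj₂ := by
  intro Y Z f g hf hg
  obtain ⟨b, rfl⟩ := Triangle.yoneda_exact₂ T hT f (h₁ _ (by rw [F.map_comp, hf, comp_zero]))
  rw [Category.assoc, h₃ (b ≫ g) (by rw [F.map_comp, hg, comp_zero]), comp_zero]

end

variable {A : Type*} [Category A] [Abelian A] [HasShift A ℤ] (F : C ⥤ A) [F.IsHomological]
  [F.CommShift ℤ]

lemma map_invRotate_mor₁_comp_eq_zero (T : Triangle C) {Y : C} (φ : T.obj₁ ⟶ Y)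
    (h : F.map (T.mor₃ ≫ φ⟦(1 : ℤ)⟧') = 0) :
    F.map (T.invRotate.mor₁ ≫ φ) = 0 := by
  let e := shiftFunctorCompIsoId C (1 : ℤ) (-1) (add_neg_cancel 1)
  change F.map ((-(T.mor₃⟦(-1 : ℤ)⟧') ≫ e.hom.app T.obj₁) ≫ φ) = 0
  have key : (-(T.mor₃⟦(-1 : ℤ)⟧') ≫ e.hom.app T.obj₁) ≫ φ =
      -((T.mor₃ ≫ φ⟦(1 : ℤ)⟧')⟦(-1 : ℤ)⟧' ≫ e.hom.app Y) := by
    simp only [e, Functor.map_comp, shift_shift_neg', Preadditive.neg_comp, Category.assoc,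
      Iso.inv_hom_id_app]
    erw [Category.comp_id]
  rw [key, F.map_neg, F.map_comp, map_shift_map_eq_zero F _ h, zero_comp, neg_zero]

lemma exists_map_mor₁_comp_eq (T : Triangle C) (hT : T ∈ distTriang C)
    (h₂ : F.map T.mor₂ = 0) {Y : C} (φ : T.obj₁ ⟶ Y) (h : F.map (T.mor₃ ≫ φ⟦(1 : ℤ)⟧') = 0) :
    ∃ σ : F.obj T.obj₂ ⟶ F.obj Y, F.map T.mor₁ ≫ σ = F.map φ := by
  have hS := F.map_distinguished_exact _ (inv_rot_of_distTriang _ hT)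
  have : Epi (((shortComplexOfDistTriangle _ (inv_rot_of_distTriang _ hT)).map F).g) :=
    (F.map_distinguished_exact _ hT).epi_f h₂
  exact ⟨hS.desc (F.map φ)
    ((F.map_comp _ _).symm.trans (F.map_invRotate_mor₁_comp_eq_zero T φ h)), hS.g_desc _ _⟩

lemma nonempty_iso_biprod_of_comp_eq_id (T : Triangle C) (hT : T ∈ distTriang C)
    (σ : F.obj T.obj₃ ⟶ F.obj T.obj₂) (hσ : σ ≫ F.map T.mor₂ = 𝟙 _) :
    Nonempty (F.obj T.obj₂ ≅ F.obj T.obj₁ ⊞ F.obj T.obj₃) := by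
  have h₃ : F.map T.mor₃ = 0 := calc
    F.map T.mor₃ = σ ≫ F.map (T.mor₂ ≫ T.mor₃) := by
      rw [F.map_comp, ← Category.assoc, hσ, Category.id_comp]
    _ = 0 := by rw [comp_distTriang_mor_zero₂₃ _ hT, F.map_zero, comp_zero]
  have hf : F.map (T.invRotate.mor₁ ≫ 𝟙 _) = 0 :=
    F.map_invRotate_mor₁_comp_eq_zero T (𝟙 _) (by simpa using h₃)
  -- `erw`: the source of `𝟙 _` is `T.invRotate.obj₂`, which is `T.obj₁` only after unfolding.
  erw [Category.comp_id] at hf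
  have : Mono (F.map T.mor₁) := (F.map_distinguished_exact _ (inv_rot_of_distTriang _ hT)).mono_g hf
  exact ⟨(ShortComplex.Splitting.ofExactOfSection _ (F.map_distinguished_exact T hT)
    σ hσ this).isoBinaryBiproduct⟩

variable {F} in
lemma HasEnoughKerProjectives.exists_isKerSqProjective (hF : F.HasEnoughKerProjectives) (X : C) :
    ∃ (P : C) (p : P ⟶ X) (σ : F.obj X ⟶ F.obj P),
      F.IsKerSqProjective P ∧ σ ≫ F.map p = 𝟙 _ := by
  obtain ⟨Q, N, q, a, d, hT, ha, hQ⟩ := hF X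
  obtain ⟨Q', N', q', a', d', hT', ha', hQ'⟩ := hF N
  obtain ⟨P, u, v, hTP⟩ := distinguished_cocone_triangle₂ (q' ≫ d)
  obtain ⟨(p : P ⟶ X), hup, -⟩ := complete_distinguished_triangle_morphism₂ _ _ hTP hT (𝟙 Q) q'
    (show (q' ≫ d) ≫ (𝟙 Q)⟦(1 : ℤ)⟧' = q' ≫ d by rw [Functor.map_id, Category.comp_id])
  replace hup : u ≫ p = 𝟙 Q ≫ q := hup
  -- `d ≫ u⟦1⟧'` dies after `q'`, hence factors through `a'`, which `F` kills.
  have hdu : F.map (d ≫ u⟦(1 : ℤ)⟧') = 0 := by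
    have hzero : (q' ≫ d) ≫ u⟦(1 : ℤ)⟧' = 0 := comp_distTriang_mor_zero₃₁ _ hTP
    obtain ⟨(m : N' ⟶ P⟦(1 : ℤ)⟧), hm⟩ := Triangle.yoneda_exact₂ _ hT' (d ≫ u⟦(1 : ℤ)⟧')
      ((Category.assoc _ _ _).symm.trans hzero)
    replace hm : d ≫ u⟦(1 : ℤ)⟧' = a' ≫ m := hm
    rw [hm, F.map_comp, ha', zero_comp]
  obtain ⟨(σ : F.obj X ⟶ F.obj P), (hσ : F.map q ≫ σ = F.map u)⟩ :=
    F.exists_map_mor₁_comp_eq _ hT ha u hdu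
  refine ⟨P, p, σ, F.isKerSqProjective_of_distTriang _ hTP hQ hQ', ?_⟩
  have : Epi (F.map q) := (F.map_distinguished_exact _ hT).epi_f ha
  rw [← cancel_epi (F.map q), ← Category.assoc, hσ, ← F.map_comp, hup, Category.id_comp,
    Category.comp_id]

lemma exists_nonempty_iso_map_isEmpty_iso (hF : F.HasEnoughKerProjectives) {X : C}
    (hX : ¬ F.IsKerSqProjective X) :
    ∃ B D : C, Nonempty (F.obj B ≅ F.obj D) ∧ IsEmpty (B ≅ D) := by
  obtain ⟨P, p, σ, hP, hσ⟩ := hF.exists_isKerSqProjective X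
  obtain ⟨W, _, _, hT⟩ := distinguished_cocone_triangle₁ p
  obtain ⟨e⟩ := F.nonempty_iso_biprod_of_comp_eq_id _ hT σ hσ
  have := preservesBinaryBiproduct_of_preservesBiproduct F W X
  refine ⟨P, W ⊞ X, ⟨e ≪≫ (F.mapBiprod W X).symm⟩, ⟨fun e' => hX ?_⟩⟩
  exact hP.of_retract ((BinaryBiproduct.bicone W X).retract_right.trans (Retract.ofIso e'.symm))

end CategoryTheory.Functor

/-- Let `𝔗` be a triangulated category, `𝕀` a homological ideal in `𝔗` (the kernel on
morphisms of a stable homological functor) with enough `𝕀`-projective objects, and let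
`F : 𝔗 → 𝒜` be a universal `𝕀`-exact stable homological functor.  If `𝕀² ≠ 0` then
there are objects `B`, `D` of `𝔗` with `F(B) ≅ F(D)` that are not isomorphic in `𝔗`. -/
theorem stmt17
    {C : Type u} [Category.{v} C] [Preadditive C] [HasZeroObject C] [HasShift C ℤ]
    [∀ n : ℤ, (CategoryTheory.shiftFunctor C n).Additive] [Pretriangulated C]
    {A : Type w} [Category.{w'} A] [Abelian A] [HasShift A ℤ]
    -- the ideal 𝕀
    (I : ∀ X Y : C, AddSubgroup (X ⟶ Y))
    (hI_left : ∀ {X Y Z : C} (f : X ⟶ Y) (g : Y ⟶ Z), g ∈ I Y Z → f ≫ g ∈ I X Z)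
    (hI_right : ∀ {X Y Z : C} (f : X ⟶ Y) (g : Y ⟶ Z), f ∈ I X Y → f ≫ g ∈ I X Z)
    -- F is a stable homological functor defining 𝕀, so 𝕀 is a homological ideal
    (F : C ⥤ A) [F.IsHomological] [F.CommShift ℤ]
    (hker : ∀ {X Y : C} (f : X ⟶ Y), f ∈ I X Y ↔ F.map f = 0)
    -- there are enough 𝕀-projective objects
    (henough : ∀ X : C, ∃ (P N : C) (π : P ⟶ X) (ι : X ⟶ N) (δ : N ⟶ P⟦(1 : ℤ)⟧),
      (Triangle.mk π ι δ ∈ distTriang C) ∧ ι ∈ I X N ∧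
      ∀ (Y : C) (f : P ⟶ Y), f ∈ I P Y → f = 0)
    -- F is universal: every 𝕀-exact homological functor factors through F,
    -- uniquely up to natural isomorphism
    (huniv : ∀ {B : Type x} [Category.{x'} B] [Abelian B] (G : C ⥤ B),
      G.IsHomological → (∀ {X Y : C} (f : X ⟶ Y), f ∈ I X Y → G.map f = 0) →
      (∃ H : A ⥤ B, Nonempty (F ⋙ H ≅ G)) ∧
      (∀ H H' : A ⥤ B, Nonempty (F ⋙ H ≅ G) → Nonempty (F ⋙ H' ≅ G) →
        Nonempty (H ≅ H')))
    -- 𝕀² ≠ 0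
    (hsq : ∃ (X Y Z : C) (f : X ⟶ Y) (g : Y ⟶ Z), f ∈ I X Y ∧ g ∈ I Y Z ∧ f ≫ g ≠ 0) :
    ∃ B D : C, Nonempty (F.obj B ≅ F.obj D) ∧ IsEmpty (B ≅ D) := by
  obtain ⟨X, Y, Z, f, g, hf, hg, hfg⟩ := hsq
  have hF : F.HasEnoughKerProjectives := fun X ↦ by
    obtain ⟨P, N, π, ι, δ, hT, hι, hP⟩ := henough X
    exact ⟨P, N, π, ι, δ, hT, (hker ι).1 hι, fun Y f hf ↦ hP Y f ((hker f).2 hf)⟩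
  exact F.exists_nonempty_iso_map_isEmpty_iso hF
    fun hX ↦ hfg (hX f g ((hker f).1 hf) ((hker g).1 hg))
end
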